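/- The isomorphism relation on countable linear orders is Borel reducible to the conjugacy relation on Aut(ℚ). Precisely: code linear orders on ℕ as elements of the Polish space (ℕ × ℕ) → Bool (with Bool discrete and the product topology), letting LO denote the set of codes R that define a linear order on ℕ, and code maps ℚ → ℚ as elements of the Polish space ℚ → ℚ (with ℚ discrete and the product topology). Then there exists a Borel-measurable function f from (ℕ × ℕ) → Bool to ℚ → ℚ such that for every R ∈ LO, f(R) is an order automorphism of ℚ, and for all R, S ∈ LO: (ℕ, R) is order-isomorphic to (ℕ, S) if and only if there exists an order automorphism β of ℚ with β ∘ f(R) = f(S) ∘ β. -/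

import Mathlib

/-!
A code `R` is sent to the order `L = (ℕ, R)` and then to `L ×ₗ ℚ`, a countable dense linear order
without endpoints. Cantor's back-and-forth argument, run with every choice made by least index,
gives an isomorphism `ℚ ≃o L ×ₗ ℚ` computed from countably many comparisons in `L ×ₗ ℚ`, so it
depends measurably on `R`. The reduction sends `R` to the shift `(a, q) ↦ (a, q + 1)`
transported to `ℚ`.

An isomorphism `L ≃o M` induces a conjugacy of the shifts. Conversely, `x` and `y` lie in the same
block `{a} ×ₗ ℚ` iff `x ≤ shiftⁿ y` and `y ≤ shiftⁿ x` for some `n`, a property that is preserved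
by any order isomorphism commuting with the shifts; so such an isomorphism maps blocks to blocks
and induces `L ≃o M`.
-/

open Function Denumerable Encodable

section LexShift

variable {A B : Type*} [PartialOrder A] [PartialOrder B]

def lexShift (A : Type*) [PartialOrder A] : A ×ₗ ℚ ≃o A ×ₗ ℚ :=
  Prod.Lex.prodLexCongr (OrderIso.refl A) (OrderIso.addRight 1)

lemma lexShift_iterate (n : ℕ) (x : A ×ₗ ℚ) :
    (lexShift A)^[n] x = toLex ((ofLex x).1, (ofLex x).2 + n) := by
  induction n with
  | zero => simp
  | succ n ih =>
    rw [iterate_succ_apply', ih]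
    simp [lexShift, add_assoc]

lemma fst_eq_iff_exists_le_lexShift_iterate {x y : A ×ₗ ℚ} :
    (ofLex x).1 = (ofLex y).1 ↔ ∃ n : ℕ, x ≤ (lexShift A)^[n] y ∧ y ≤ (lexShift A)^[n] x := by
  constructor
  · intro h
    obtain ⟨n, hn⟩ := exists_nat_ge (max ((ofLex x).2 - (ofLex y).2) ((ofLex y).2 - (ofLex x).2))
    refine ⟨n, ?_, ?_⟩ <;> rw [lexShift_iterate, ← toLex_ofLex x, ← toLex_ofLex y] <;>
      simp only [Prod.Lex.toLex_le_toLex, ofLex_toLex] <;> right <;> constructor <;> grind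
  · rintro ⟨n, hxy, hyx⟩
    have h₁ := Prod.Lex.monotone_fst _ _ hxy
    have h₂ := Prod.Lex.monotone_fst _ _ hyx
    rw [lexShift_iterate] at h₁ h₂
    exact le_antisymm h₁ h₂

lemma fst_map_eq_of_semiconj_lexShift {g : A ×ₗ ℚ ≃o B ×ₗ ℚ}
    (hg : Semiconj g (lexShift A) (lexShift B)) {x y : A ×ₗ ℚ} (h : (ofLex x).1 = (ofLex y).1) :
    (ofLex (g x)).1 = (ofLex (g y)).1 := by
  obtain ⟨n, hxy, hyx⟩ := fst_eq_iff_exists_le_lexShift_iterate.1 h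
  refine fst_eq_iff_exists_le_lexShift_iterate.2 ⟨n, ?_, ?_⟩ <;>
    rw [← (hg.iterate_right n).eq] <;> exact g.monotone ‹_›

/-- For `g` commuting with the shifts, `blockMap g a` is the first coordinate of `g x` for every
`x` in the block of `a`, by `fst_map_eq_of_semiconj_lexShift`. -/
def blockMap (g : A ×ₗ ℚ ≃o B ×ₗ ℚ) (a : A) : B := (ofLex (g (toLex (a, 0)))).1

lemma monotone_blockMap (g : A ×ₗ ℚ ≃o B ×ₗ ℚ) : Monotone (blockMap g) := fun _ _ h =>
  Prod.Lex.monotone_fst _ _ (g.monotone (Prod.Lex.toLex_mono ⟨h, le_rfl⟩))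

lemma blockMap_symm_blockMap {g : A ×ₗ ℚ ≃o B ×ₗ ℚ} (hg : Semiconj g (lexShift A) (lexShift B))
    (a : A) : blockMap g.symm (blockMap g a) = a := by
  have hg' : Semiconj g.symm (lexShift B) (lexShift A) := hg.inverse_left g.left_inv g.right_inv
  simpa [blockMap] using
    fst_map_eq_of_semiconj_lexShift hg' (x := toLex (blockMap g a, 0)) (y := g (toLex (a, 0))) rfl

theorem nonempty_orderIso_iff_exists_semiconj_lexShift :
    Nonempty (A ≃o B) ↔ ∃ g : A ×ₗ ℚ ≃o B ×ₗ ℚ, Semiconj g (lexShift A) (lexShift B) := by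
  constructor
  · rintro ⟨φ⟩
    exact ⟨Prod.Lex.prodLexCongr φ (OrderIso.refl ℚ), fun x => by simp [lexShift, Prod.map]⟩
  · rintro ⟨g, hg⟩
    have hg' : Semiconj g.symm (lexShift B) (lexShift A) := hg.inverse_left g.left_inv g.right_inv
    exact ⟨Equiv.toOrderIso ⟨blockMap g, blockMap g.symm, blockMap_symm_blockMap hg,
      blockMap_symm_blockMap hg'⟩ (monotone_blockMap g) (monotone_blockMap g.symm)⟩

end LexShift

lemma exists_semiconj_conj_iff {X Y Z : Type*} [LE X] [LE Y] [LE Z] (e : X ≃o Y) (e' : X ≃o Z)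
    (s : Y ≃o Y) (s' : Z ≃o Z) :
    (∃ g : Y ≃o Z, Semiconj g s s') ↔
      ∃ b : X ≃o X, Semiconj b ((e.trans s).trans e.symm) ((e'.trans s').trans e'.symm) := by
  constructor
  · rintro ⟨g, hg⟩
    exact ⟨(e.trans g).trans e'.symm, fun x => by simp [hg.eq]⟩
  · rintro ⟨b, hb⟩
    refine ⟨(e.symm.trans b).trans e', fun y => ?_⟩
    simpa using congrArg e' (hb (e.symm y))

lemma measurable_apply_countable {X γ δ : Type*} [MeasurableSpace X] [Countable γ]
    [MeasurableSpace γ] [MeasurableSingletonClass γ] [MeasurableSpace δ] {F : X → γ → δ}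
    (hF : ∀ c, Measurable (F · c)) {g : X → γ} (hg : Measurable g) :
    Measurable fun x => F x (g x) :=
  (measurable_from_prod_countable_left (f := fun p : X × γ => F p.1 p.2) hF).comp
    (measurable_id.prodMk hg)

namespace GreedyBackAndForth

variable {α β : Type*}

open Classical in
noncomputable def findOrZero (p : ℕ → Prop) : ℕ := if h : ∃ n, p n then Nat.find h else 0

lemma findOrZero_spec {p : ℕ → Prop} (h : ∃ n, p n) : p (findOrZero p) := by
  classical
  rw [findOrZero, dif_pos h]
  exact Nat.find_spec h

lemma findOrZero_eq_iff {p : ℕ → Prop} {k : ℕ} :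
    findOrZero p = k ↔ (p k ∧ ∀ m < k, ¬ p m) ∨ (k = 0 ∧ ∀ m, ¬ p m) := by
  classical
  unfold findOrZero
  split_ifs with h
  · rw [Nat.find_eq_iff]
    refine ⟨Or.inl, ?_⟩
    rintro (h' | ⟨-, h'⟩)
    · exact h'
    · obtain ⟨n, hn⟩ := h
      exact absurd hn (h' n)
  · push Not at h
    simp [h, eq_comm]

section Construction

variable [Denumerable α] [Denumerable β] (cα : α → α → Ordering) (cβ : β → β → Ordering)

/-- `(a, b)` may be added to the finite partial map `f`. -/
def Fits (f : Finset (α × β)) (a : α) (b : β) : Prop := ∀ p ∈ f, cα p.1 a = cβ p.2 b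

noncomputable def searchRight (f : Finset (α × β)) (a : α) : β :=
  ofNat β (findOrZero fun n => Fits cα cβ f a (ofNat β n))

noncomputable def searchLeft (f : Finset (α × β)) (b : β) : α :=
  ofNat α (findOrZero fun n => Fits cα cβ f (ofNat α n) b)

open Classical in
noncomputable def step (f : Finset (α × β)) : α ⊕ β → Finset (α × β)
  | .inl a => insert (a, searchRight cα cβ f a) f
  | .inr b => insert (searchLeft cα cβ f b, b) f

/-- At stage `n + 1` the `n`-th element of `α ⊕ β` is taken care of. -/
noncomputable def stage : ℕ → Finset (α × β)
  | 0 => ∅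
  | n + 1 => step cα cβ (stage n) (ofNat (α ⊕ β) n)

noncomputable def toFun (a : α) : β :=
  searchRight cα cβ (stage cα cβ (encode (Sum.inl a : α ⊕ β))) a

noncomputable def invFun (b : β) : α :=
  searchLeft cα cβ (stage cα cβ (encode (Sum.inr b : α ⊕ β))) b

lemma stage_mono : Monotone (stage cα cβ) := by
  classical
  refine monotone_nat_of_le_succ fun n => ?_
  simp only [stage]
  cases ofNat (α ⊕ β) n <;> exact Finset.subset_insert _ _

lemma mem_stage_toFun (a : α) :
    (a, toFun cα cβ a) ∈ stage cα cβ (encode (Sum.inl a : α ⊕ β) + 1) := by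
  rw [stage, ofNat_encode]
  simp only [step, Finset.mem_insert]
  exact Or.inl rfl

lemma mem_stage_invFun (b : β) :
    (invFun cα cβ b, b) ∈ stage cα cβ (encode (Sum.inr b : α ⊕ β) + 1) := by
  rw [stage, ofNat_encode]
  simp only [step, Finset.mem_insert]
  exact Or.inl rfl

end Construction

section Correctness

variable [LinearOrder α] [LinearOrder β]

def IsPartialIso (f : Finset (α × β)) : Prop := ∀ p ∈ f, ∀ q ∈ f, cmp p.1 q.1 = cmp p.2 q.2

lemma IsPartialIso.insert [DecidableEq (α × β)] {f : Finset (α × β)} (hf : IsPartialIso f)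
    {a : α} {b : β} (hab : ∀ p ∈ f, cmp p.1 a = cmp p.2 b) : IsPartialIso (insert (a, b) f) := by
  intro p hp q hq
  rw [Finset.mem_insert] at hp hq
  rcases hp with rfl | hp <;> rcases hq with rfl | hq
  · simp
  · exact cmp_eq_cmp_symm.1 (hab q hq)
  · exact hab p hp
  · exact hf p hp q hq

lemma IsPartialIso.image_swap {f : Finset (α × β)} (hf : IsPartialIso f) :
    IsPartialIso (f.image Prod.swap) := by
  simp only [IsPartialIso, Finset.mem_image]
  rintro _ ⟨p, hp, rfl⟩ _ ⟨q, hq, rfl⟩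
  exact (hf p hp q hq).symm

lemma fits_searchRight [Denumerable β] [DenselyOrdered β] [NoMinOrder β] [NoMaxOrder β]
    [Nonempty β] {f : Finset (α × β)} (hf : IsPartialIso f) (a : α) :
    Fits cmp cmp f a (searchRight cmp cmp f a) := by
  obtain ⟨b, hb⟩ := Order.PartialIso.exists_across ⟨f, hf⟩ a
  have : ∃ n, Fits cmp cmp f a (ofNat β n) := ⟨encode b, by simpa [Fits] using hb⟩
  exact findOrZero_spec this

lemma fits_searchLeft [Denumerable α] [DenselyOrdered α] [NoMinOrder α] [NoMaxOrder α]
    [Nonempty α] {f : Finset (α × β)} (hf : IsPartialIso f) (b : β) :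
    Fits cmp cmp f (searchLeft cmp cmp f b) b := by
  obtain ⟨a, ha⟩ := Order.PartialIso.exists_across ⟨_, hf.image_swap⟩ b
  have : ∃ n, Fits cmp cmp f (ofNat α n) b := ⟨encode a, fun p hp => by
    simpa using (ha p.swap (Finset.mem_image_of_mem _ hp)).symm⟩
  exact findOrZero_spec this

variable [Denumerable α] [Denumerable β] [DenselyOrdered α] [NoMinOrder α] [NoMaxOrder α]
  [Nonempty α] [DenselyOrdered β] [NoMinOrder β] [NoMaxOrder β] [Nonempty β]

lemma isPartialIso_stage (n : ℕ) : IsPartialIso (stage (α := α) (β := β) cmp cmp n) := by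
  induction n with
  | zero => simp [IsPartialIso, stage]
  | succ n ih =>
    simp only [stage]
    cases ofNat (α ⊕ β) n with
    | inl a => simp only [step]; convert ih.insert (fits_searchRight ih a)
    | inr b => simp only [step]; convert ih.insert (fits_searchLeft ih b)

lemma cmp_invFun (a : α) (b : β) : cmp a (invFun cmp cmp b) = cmp (toFun cmp cmp a) b := by
  set N := max (encode (Sum.inl a : α ⊕ β) + 1) (encode (Sum.inr b : α ⊕ β) + 1)
  exact isPartialIso_stage N _ (stage_mono _ _ (le_max_left _ _) (mem_stage_toFun _ _ a)) _
    (stage_mono _ _ (le_max_right _ _) (mem_stage_invFun _ _ b))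

variable (α β) in
/-- Cantor's back-and-forth isomorphism, with every choice made by least index. -/
noncomputable def greedyIso : α ≃o β :=
  OrderIso.ofCmpEqCmp (toFun cmp cmp) (invFun cmp cmp) cmp_invFun

end Correctness

section Measurability

variable {X : Type*} [MeasurableSpace X]

lemma measurable_findOrZero {p : X → ℕ → Prop} (hp : ∀ n, Measurable (p · n)) :
    Measurable fun x => findOrZero (p x) := by
  refine measurable_to_countable' fun k => ?_
  simp only [Set.preimage, Set.mem_singleton_iff, findOrZero_eq_iff]
  exact measurableSet_setOfPred.2 (by fun_prop)

def MeasurableCmp (c : X → α → α → Ordering) : Prop := ∀ a a' o, Measurable fun x => c x a a' = o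

variable [Denumerable α] [Denumerable β] {cα : X → α → α → Ordering} {cβ : X → β → β → Ordering}

lemma measurable_fits (hα : MeasurableCmp cα) (hβ : MeasurableCmp cβ) (f : Finset (α × β))
    (a : α) (b : β) : Measurable fun x => Fits (cα x) (cβ x) f a b := by
  have key (p : α × β) : Measurable fun x => cα x p.1 a = cβ x p.2 b := by
    convert Measurable.exists fun o => (hα p.1 a o).and (hβ p.2 b o) using 2 with x
    exact ⟨fun h => ⟨_, rfl, h.symm⟩, fun ⟨_, h₁, h₂⟩ => h₁.trans h₂.symm⟩
  exact Measurable.forall fun p => measurable_const.imp (key p)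

lemma measurable_searchRight [MeasurableSpace β] (hα : MeasurableCmp cα) (hβ : MeasurableCmp cβ)
    (f : Finset (α × β)) (a : α) : Measurable fun x => searchRight (cα x) (cβ x) f a :=
  measurable_from_nat.comp (measurable_findOrZero fun _ => measurable_fits hα hβ f a _)

lemma measurable_searchLeft [MeasurableSpace α] (hα : MeasurableCmp cα) (hβ : MeasurableCmp cβ)
    (f : Finset (α × β)) (b : β) : Measurable fun x => searchLeft (cα x) (cβ x) f b :=
  measurable_from_nat.comp (measurable_findOrZero fun _ => measurable_fits hα hβ f _ b)

variable [MeasurableSpace α] [MeasurableSingletonClass α] [MeasurableSpace β]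
  [MeasurableSingletonClass β]

open Classical in
lemma measurable_stage (hα : MeasurableCmp cα) (hβ : MeasurableCmp cβ) (n : ℕ) :
    Measurable fun x => stage (cα x) (cβ x) n := by
  induction n with
  | zero => exact measurable_const
  | succ n ih =>
    refine measurable_apply_countable (F := fun x f => step (cα x) (cβ x) f (ofNat _ n))
      (fun f => ?_) ih
    cases ofNat (α ⊕ β) n with
    | inl a =>
      exact (measurable_of_countable fun b : β => insert (a, b) f).comp
        (measurable_searchRight hα hβ f a)
    | inr b =>
      exact (measurable_of_countable fun a : α => insert (a, b) f).comp
        (measurable_searchLeft hα hβ f b)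

lemma measurable_toFun (hα : MeasurableCmp cα) (hβ : MeasurableCmp cβ) (a : α) :
    Measurable fun x => toFun (cα x) (cβ x) a :=
  measurable_apply_countable (fun f => measurable_searchRight hα hβ f a) (measurable_stage hα hβ _)

lemma measurable_invFun (hα : MeasurableCmp cα) (hβ : MeasurableCmp cβ) (b : β) :
    Measurable fun x => invFun (cα x) (cβ x) b :=
  measurable_apply_countable (fun f => measurable_searchLeft hα hβ f b) (measurable_stage hα hβ _)

end Measurability

end GreedyBackAndForth

open GreedyBackAndForth

lemma isLinearOrder_iff {α : Type*} {r : α → α → Prop} :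
    IsLinearOrder α r ↔ (∀ a b, r a b ∨ r b a) ∧ (∀ a b, r a b → r b a → a = b) ∧
      ∀ a b c, r a b → r b c → r a c := by
  refine ⟨fun _ => ⟨total_of r, fun _ _ => antisymm_of r, fun _ _ _ => trans_of r⟩, ?_⟩
  rintro ⟨htot, hanti, htrans⟩
  exact { total := htot, antisymm := hanti, trans := htrans, refl := fun a => (htot a a).elim id id }

noncomputable abbrev linearOrderOfIsLinearOrder {α : Type*} (r : α → α → Prop)
    [IsLinearOrder α r] : LinearOrder α where
  le := r
  le_refl := refl_of r
  le_trans _ _ _ := trans_of r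
  le_antisymm _ _ := antisymm_of r
  le_total := total_of r
  toDecidableLE := Classical.decRel r

section CodeOrder

/-- `ℕ` ordered by the code `R` when `R` codes a linear order, and by its usual order
otherwise. -/
def CodeOrder (_R : (ℕ × ℕ) → Bool) : Type := ℕ

open Classical in
noncomputable instance CodeOrder.instLinearOrder (R : (ℕ × ℕ) → Bool) :
    LinearOrder (CodeOrder R) :=
  if h : IsLinearOrder ℕ (fun m n => R (m, n) = true) then
    @linearOrderOfIsLinearOrder ℕ (fun m n => R (m, n) = true) h
  else inferInstanceAs (LinearOrder ℕ)

instance (R : (ℕ × ℕ) → Bool) : Nonempty (CodeOrder R) := inferInstanceAs (Nonempty ℕ)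

instance (R : (ℕ × ℕ) → Bool) : Denumerable (CodeOrder R ×ₗ ℚ) :=
  inferInstanceAs (Denumerable (ℕ × ℚ))

def toCodeOrder (R : (ℕ × ℕ) → Bool) : ℕ ≃ CodeOrder R := Equiv.refl ℕ

variable {R S : (ℕ × ℕ) → Bool}

lemma toCodeOrder_le_toCodeOrder_iff (m n : ℕ) :
    toCodeOrder R m ≤ toCodeOrder R n ↔
      (IsLinearOrder ℕ (fun m n => R (m, n) = true) ∧ R (m, n) = true) ∨
      (¬ IsLinearOrder ℕ (fun m n => R (m, n) = true) ∧ m ≤ n) := by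
  by_cases h : IsLinearOrder ℕ (fun m n => R (m, n) = true)
  · have e : CodeOrder.instLinearOrder R = @linearOrderOfIsLinearOrder ℕ _ h := dif_pos h
    simp only [h, true_and, not_true_eq_false, false_and, or_false]
    rw [e]
    rfl
  · have e : CodeOrder.instLinearOrder R = inferInstanceAs (LinearOrder ℕ) := dif_neg h
    simp only [h, false_and, not_false_eq_true, true_and, false_or]
    rw [e]
    rfl

lemma toCodeOrder_le_toCodeOrder_of_isLinearOrder
    (hR : IsLinearOrder ℕ (fun m n => R (m, n) = true)) (m n : ℕ) :
    toCodeOrder R m ≤ toCodeOrder R n ↔ R (m, n) = true := by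
  simp [toCodeOrder_le_toCodeOrder_iff, hR]

lemma nonempty_relIso_iff_nonempty_orderIso (hR : IsLinearOrder ℕ (fun m n => R (m, n) = true))
    (hS : IsLinearOrder ℕ (fun m n => S (m, n) = true)) :
    Nonempty ((fun m n : ℕ => R (m, n) = true) ≃r (fun m n : ℕ => S (m, n) = true)) ↔
      Nonempty (CodeOrder R ≃o CodeOrder S) := by
  have hR' := toCodeOrder_le_toCodeOrder_of_isLinearOrder hR
  have hS' := toCodeOrder_le_toCodeOrder_of_isLinearOrder hS
  constructor
  · rintro ⟨φ⟩
    refine ⟨⟨(toCodeOrder R).symm.trans (φ.toEquiv.trans (toCodeOrder S)), fun {a b} => ?_⟩⟩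
    rw [← (toCodeOrder R).apply_symm_apply a, ← (toCodeOrder R).apply_symm_apply b]
    simp only [Equiv.trans_apply, Equiv.symm_apply_apply, hR', hS', RelIso.coe_fn_toEquiv,
      φ.map_rel_iff]
  · rintro ⟨φ⟩
    refine ⟨⟨(toCodeOrder R).trans (φ.toEquiv.trans (toCodeOrder S).symm), fun {a b} => ?_⟩⟩
    simp only [Equiv.trans_apply, ← hR', ← hS', Equiv.apply_symm_apply, RelIso.coe_fn_toEquiv,
      φ.map_rel_iff]

lemma measurable_apply_eq_true (m n : ℕ) :
    Measurable fun R : (ℕ × ℕ) → Bool => R (m, n) = true :=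
  measurableSet_setOfPred.1 (measurableSet_eq_fun (measurable_pi_apply _) measurable_const)

lemma measurable_isLinearOrder :
    Measurable fun R : (ℕ × ℕ) → Bool => IsLinearOrder ℕ (fun m n => R (m, n) = true) := by
  simp only [isLinearOrder_iff]
  have := measurable_apply_eq_true
  fun_prop

lemma measurable_toCodeOrder_le (m n : ℕ) :
    Measurable fun R => toCodeOrder R m ≤ toCodeOrder R n := by
  simp only [toCodeOrder_le_toCodeOrder_iff]
  have := measurable_apply_eq_true
  have := measurable_isLinearOrder
  fun_prop

lemma measurable_toLex_lt (x y : ℕ × ℚ) :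
    Measurable fun R => toLex (toCodeOrder R x.1, x.2) < toLex (toCodeOrder R y.1, y.2) := by
  simp only [Prod.Lex.toLex_lt_toLex, EmbeddingLike.apply_eq_iff_eq]
  simp only [lt_iff_le_not_ge]
  have := measurable_toCodeOrder_le
  fun_prop

lemma measurableCmp_codeOrderLex :
    MeasurableCmp fun R (x y : ℕ × ℚ) =>
      cmp (toLex (toCodeOrder R x.1, x.2)) (toLex (toCodeOrder R y.1, y.2)) := by
  intro x y o
  cases o
  · simpa only [cmp_eq_lt_iff] using measurable_toLex_lt x y
  · simp only [cmp_eq_eq_iff, EmbeddingLike.apply_eq_iff_eq, Prod.mk.injEq]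
    exact measurable_const
  · simpa only [cmp_eq_gt_iff] using measurable_toLex_lt y x

noncomputable def codeIso (R : (ℕ × ℕ) → Bool) : ℚ ≃o CodeOrder R ×ₗ ℚ := greedyIso ℚ _

noncomputable def codeAut (R : (ℕ × ℕ) → Bool) : ℚ ≃o ℚ :=
  ((codeIso R).trans (lexShift _)).trans (codeIso R).symm

lemma measurable_codeAut : Measurable fun R => ⇑(codeAut R) := by
  refine measurable_pi_lambda _ fun q => ?_
  have hℚ : MeasurableCmp fun (_ : (ℕ × ℕ) → Bool) (a a' : ℚ) => cmp a a' :=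
    fun _ _ _ => measurable_const
  -- `codeIso R` unfolds to the greedy construction on `ℕ × ℚ` for the comparison of
  -- `measurableCmp_codeOrderLex`
  exact measurable_apply_countable (F := fun R (x : ℕ × ℚ) => invFun _ _ (x.1, x.2 + 1))
    (fun x => measurable_invFun hℚ measurableCmp_codeOrderLex _)
    (measurable_toFun hℚ measurableCmp_codeOrderLex q)

end CodeOrder

/-- The isomorphism relation on countable linear orders (coded as elements
of the Polish space `(ℕ × ℕ) → Bool`) is Borel reducible to the conjugacy relation on
`Aut(ℚ)` (automorphisms coded as elements of the Polish space `ℚ → ℚ`). -/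
theorem stmt_9 :
    ∃ f : ((ℕ × ℕ) → Bool) → (ℚ → ℚ),
      Measurable f ∧
      (∀ R : (ℕ × ℕ) → Bool, IsLinearOrder ℕ (fun m n => R (m, n) = true) →
        ∃ φ : ℚ ≃o ℚ, ⇑φ = f R) ∧
      (∀ R S : (ℕ × ℕ) → Bool,
        IsLinearOrder ℕ (fun m n => R (m, n) = true) →
        IsLinearOrder ℕ (fun m n => S (m, n) = true) →
        (Nonempty ((fun m n : ℕ => R (m, n) = true) ≃r (fun m n : ℕ => S (m, n) = true)) ↔
          ∃ β : ℚ ≃o ℚ, ∀ q : ℚ, β (f R q) = f S (β q))) := by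
  refine ⟨fun R => codeAut R, measurable_codeAut, fun R _ => ⟨codeAut R, rfl⟩, fun R S hR hS => ?_⟩
  rw [nonempty_relIso_iff_nonempty_orderIso hR hS, nonempty_orderIso_iff_exists_semiconj_lexShift]
  exact exists_semiconj_conj_iff (codeIso R) (codeIso S) _ _
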